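/- Let e₀ = (1,0) ∈ ℂ² and consider the action of SU(2) × SU(2) × SU(2) × U(1) on ℂ² ⊗_ℂ ℂ² ⊗_ℂ ℂ² given by (A, B, C, z)·v = z · (A ⊗ B ⊗ C)(v). The stabilizer of the pure tensor e₀ ⊗ e₀ ⊗ e₀, namely {(A, B, C, z) : z · (A e₀) ⊗ (B e₀) ⊗ (C e₀) = e₀ ⊗ e₀ ⊗ e₀}, equals {(D_α, D_β, D_γ, z) : α, β, γ, z ∈ U(1), α β γ z = 1}, where D_α denotes the diagonal matrix diag(α, α⁻¹) ∈ SU(2). In particular, this stabilizer is isomorphic as a topological group to the 3-torus U(1)³, so the orbit of e₀ ⊗ e₀ ⊗ e₀ has dimension 7. -/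

import Mathlib

open scoped TensorProduct
open Matrix

/-!
A pure tensor determines its factors up to scalars, so `z • (A e₀ ⊗ B e₀ ⊗ C e₀) = e₀ ⊗ e₀ ⊗ e₀`
forces `A e₀`, `B e₀`, `C e₀` to be multiples of `e₀`. A matrix in `SU(2)` whose first column is
`(α, 0)` has orthogonal columns of norm one, hence is `diag(α, α⁻¹)` with `|α| = 1`. Finally
`(α, β, γ) ↦ (D_α, D_β, D_γ, (αβγ)⁻¹)` is a continuous bijection from the compact torus `U(1)³`
onto the stabilizer, hence a homeomorphism.
-/

theorem smul_tmul_tmul_eq_tmul_tmul_iff {R ι κ μ : Type*} [CommSemiring R]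
    [Finite ι] [Finite κ] [Finite μ] (z : R) (u u' : ι → R) (v v' : κ → R) (w w' : μ → R) :
    z • (u ⊗ₜ[R] v) ⊗ₜ[R] w = (u' ⊗ₜ[R] v') ⊗ₜ[R] w' ↔
      ∀ i j k, z * (u i * v j * w k) = u' i * v' j * w' k := by
  let b := ((Pi.basisFun R ι).tensorProduct (Pi.basisFun R κ)).tensorProduct (Pi.basisFun R μ)
  rw [← b.repr.injective.eq_iff, Finsupp.ext_iff]
  simp only [b, map_smul, Finsupp.smul_apply, Module.Basis.tensorProduct_repr_tmul_apply,
    Pi.basisFun_repr, smul_eq_mul, Prod.forall, mul_comm, mul_left_comm]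

theorem smul_tmul_tmul_eq_tmul_tmul_one_zero_iff {R : Type*} [CommRing R] (z : R)
    (a b c : Fin 2 → R) :
    z • (a ⊗ₜ[R] b) ⊗ₜ[R] c = (![1, 0] ⊗ₜ[R] ![1, 0]) ⊗ₜ[R] ![1, 0] ↔
      z * (a 0 * b 0 * c 0) = 1 ∧ a 1 = 0 ∧ b 1 = 0 ∧ c 1 = 0 := by
  rw [smul_tmul_tmul_eq_tmul_tmul_iff]
  constructor
  · intro h
    have h000 : z * (a 0 * b 0 * c 0) = 1 := by simpa using h 0 0 0
    have h100 : z * (a 1 * b 0 * c 0) = 0 := by simpa using h 1 0 0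
    have h010 : z * (a 0 * b 1 * c 0) = 0 := by simpa using h 0 1 0
    have h001 : z * (a 0 * b 0 * c 1) = 0 := by simpa using h 0 0 1
    refine ⟨h000, ?_, ?_, ?_⟩
    · linear_combination a 0 * h100 - a 1 * h000
    · linear_combination b 0 * h010 - b 1 * h000
    · linear_combination c 0 * h001 - c 1 * h000
  · rintro ⟨h, ha, hb, hc⟩ i j k
    fin_cases i <;> fin_cases j <;> fin_cases k <;> simp [ha, hb, hc, h]

theorem mem_specialUnitaryGroup_fin_two_and_apply_one_zero_iff {𝕜 : Type*} [RCLike 𝕜]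
    {A : Matrix (Fin 2) (Fin 2) 𝕜} :
    A ∈ specialUnitaryGroup (Fin 2) 𝕜 ∧ A 1 0 = 0 ↔ ∃ a : 𝕜, ‖a‖ = 1 ∧ A = diagonal ![a, a⁻¹] := by
  simp only [mem_specialUnitaryGroup_iff, mem_unitaryGroup_iff', star_eq_conjTranspose]
  constructor
  · rintro ⟨⟨hU, hdet⟩, h10⟩
    have h00 : ‖A 0 0‖ = 1 := by
      have := congrFun₂ hU 0 0
      simp only [mul_apply, Fin.sum_univ_two, conjTranspose_apply, one_apply_eq, RCLike.star_def,
        RCLike.conj_mul, h10, norm_zero, zero_pow two_ne_zero, RCLike.ofReal_zero, add_zero] at this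
      exact (pow_eq_one_iff_of_nonneg (norm_nonneg _) two_ne_zero).1 (by exact_mod_cast this)
    have hne : A 0 0 ≠ 0 := norm_ne_zero_iff.1 (by simp [h00])
    have h01 : A 0 1 = 0 := by
      have := congrFun₂ hU 0 1
      simpa [mul_apply, Fin.sum_univ_two, h10, hne] using this
    have h11 : A 1 1 = (A 0 0)⁻¹ := by
      rw [det_fin_two, h01, zero_mul, sub_zero] at hdet
      exact eq_inv_of_mul_eq_one_right hdet
    refine ⟨A 0 0, h00, ?_⟩
    ext i j
    fin_cases i <;> fin_cases j <;> simp [h01, h10, h11]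
  · rintro ⟨a, ha, rfl⟩
    have hunit : ∀ b : 𝕜, ‖b‖ = 1 → star b * b = 1 := fun b hb => by
      rw [RCLike.star_def, RCLike.conj_mul, hb]; norm_num
    have ha' : a ≠ 0 := norm_ne_zero_iff.1 (by simp [ha])
    refine ⟨⟨?_, ?_⟩, by simp⟩
    · rw [diagonal_conjTranspose, diagonal_mul_diagonal, ← diagonal_one]
      congr 1
      ext i
      fin_cases i
      · simpa using hunit a ha
      · simpa using hunit a⁻¹ (by simp [ha])
    · simp [ha']

def diagonalTorus :
    Set (Matrix (Fin 2) (Fin 2) ℂ × Matrix (Fin 2) (Fin 2) ℂ × Matrix (Fin 2) (Fin 2) ℂ × ℂ) :=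
  {q | ∃ α β γ z : ℂ, ‖α‖ = 1 ∧ ‖β‖ = 1 ∧ ‖γ‖ = 1 ∧ ‖z‖ = 1 ∧ α * β * γ * z = 1 ∧
    q = (diagonal ![α, α⁻¹], diagonal ![β, β⁻¹], diagonal ![γ, γ⁻¹], z)}

noncomputable def circleCubeToDiagonalTorus (p : Circle × Circle × Circle) : diagonalTorus :=
  ⟨(diagonal ![(p.1 : ℂ), (p.1 : ℂ)⁻¹], diagonal ![(p.2.1 : ℂ), (p.2.1 : ℂ)⁻¹],
      diagonal ![(p.2.2 : ℂ), (p.2.2 : ℂ)⁻¹], ↑(p.1 * p.2.1 * p.2.2)⁻¹),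
    p.1, p.2.1, p.2.2, _, Circle.norm_coe _, Circle.norm_coe _, Circle.norm_coe _,
    Circle.norm_coe _, by simp [mul_assoc], rfl⟩

theorem continuous_circleCubeToDiagonalTorus : Continuous circleCubeToDiagonalTorus :=
  Continuous.subtype_mk (by fun_prop (disch := simp)) _

theorem bijective_circleCubeToDiagonalTorus : Function.Bijective circleCubeToDiagonalTorus := by
  constructor
  · rintro ⟨a, b, c⟩ ⟨a', b', c'⟩ h
    simp only [circleCubeToDiagonalTorus, Subtype.ext_iff, Prod.mk.injEq] at h
    obtain ⟨ha, hb, hc, -⟩ := h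
    simp only [Prod.mk.injEq, ← Circle.coe_inj]
    exact ⟨by simpa using congrFun₂ ha 0 0, by simpa using congrFun₂ hb 0 0,
      by simpa using congrFun₂ hc 0 0⟩
  · rintro ⟨_, α, β, γ, z, hα, hβ, hγ, hz, h, rfl⟩
    refine ⟨(⟨α, mem_sphere_zero_iff_norm.2 hα⟩, ⟨β, mem_sphere_zero_iff_norm.2 hβ⟩,
      ⟨γ, mem_sphere_zero_iff_norm.2 hγ⟩), ?_⟩
    refine Subtype.ext (Prod.ext rfl (Prod.ext rfl (Prod.ext rfl ?_)))
    exact (eq_inv_of_mul_eq_one_right h).symm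

noncomputable def diagonalTorusHomeomorph : Circle × Circle × Circle ≃ₜ diagonalTorus :=
  continuous_circleCubeToDiagonalTorus.homeoOfEquivCompactToT2
    (f := Equiv.ofBijective _ bijective_circleCubeToDiagonalTorus)

/-- In the action of `SU(2) × SU(2) × SU(2) × U(1)` on
`ℂ² ⊗ ℂ² ⊗ ℂ²` by `(A,B,C,z)·v = z·(A ⊗ B ⊗ C)v`, the stabilizer of the pure
tensor `e₀ ⊗ e₀ ⊗ e₀` (with `e₀ = (1,0)`) is exactly
`{(D_α, D_β, D_γ, z) : |α| = |β| = |γ| = |z| = 1, αβγz = 1}` where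
`D_α = diag(α, α⁻¹)`; in particular it is a `3`-torus `U(1)³`, so the orbit of
`e₀ ⊗ e₀ ⊗ e₀` has dimension `7`. -/
theorem stabilizer_pure_tensor_SU2_cubed (e0 : Fin 2 → ℂ) (he0 : e0 = ![1, 0]) :
    {q : Matrix (Fin 2) (Fin 2) ℂ × Matrix (Fin 2) (Fin 2) ℂ × Matrix (Fin 2) (Fin 2) ℂ × ℂ |
        (q.1.conjTranspose * q.1 = 1 ∧ q.1.det = 1) ∧
        (q.2.1.conjTranspose * q.2.1 = 1 ∧ q.2.1.det = 1) ∧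
        (q.2.2.1.conjTranspose * q.2.2.1 = 1 ∧ q.2.2.1.det = 1) ∧
        ‖q.2.2.2‖ = 1 ∧
        q.2.2.2 • (TensorProduct.map (TensorProduct.map q.1.mulVecLin q.2.1.mulVecLin)
            q.2.2.1.mulVecLin) ((e0 ⊗ₜ[ℂ] e0) ⊗ₜ[ℂ] e0) = (e0 ⊗ₜ[ℂ] e0) ⊗ₜ[ℂ] e0}
      = {q | ∃ α β γ z : ℂ, ‖α‖ = 1 ∧ ‖β‖ = 1 ∧ ‖γ‖ = 1 ∧ ‖z‖ = 1 ∧ α * β * γ * z = 1 ∧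
          q = (Matrix.diagonal ![α, α⁻¹], Matrix.diagonal ![β, β⁻¹],
               Matrix.diagonal ![γ, γ⁻¹], z)} ∧
    Nonempty
      (↥{q : Matrix (Fin 2) (Fin 2) ℂ × Matrix (Fin 2) (Fin 2) ℂ × Matrix (Fin 2) (Fin 2) ℂ × ℂ |
          ∃ α β γ z : ℂ, ‖α‖ = 1 ∧ ‖β‖ = 1 ∧ ‖γ‖ = 1 ∧ ‖z‖ = 1 ∧ α * β * γ * z = 1 ∧
            q = (Matrix.diagonal ![α, α⁻¹], Matrix.diagonal ![β, β⁻¹],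
                 Matrix.diagonal ![γ, γ⁻¹], z)} ≃ₜ (Circle × Circle × Circle)) := by
  subst he0
  have hcol : ∀ M : Matrix (Fin 2) (Fin 2) ℂ, M *ᵥ ![1, 0] = fun i => M i 0 := fun M => by
    ext i; simp [mulVec, dotProduct, Fin.sum_univ_two]
  have hSU : ∀ M : Matrix (Fin 2) (Fin 2) ℂ,
      (Mᴴ * M = 1 ∧ M.det = 1) ↔ M ∈ specialUnitaryGroup (Fin 2) ℂ := fun M => by
    rw [mem_specialUnitaryGroup_iff, mem_unitaryGroup_iff', star_eq_conjTranspose]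
  refine ⟨?_, ⟨diagonalTorusHomeomorph.symm⟩⟩
  ext ⟨A, B, C, z⟩
  simp only [Set.mem_ofPred_eq, hSU, TensorProduct.map_tmul, mulVecLin_apply, hcol,
    smul_tmul_tmul_eq_tmul_tmul_one_zero_iff]
  constructor
  · rintro ⟨hA, hB, hC, hz, hprod, hA10, hB10, hC10⟩
    obtain ⟨α, hα, rfl⟩ := mem_specialUnitaryGroup_fin_two_and_apply_one_zero_iff.1 ⟨hA, hA10⟩
    obtain ⟨β, hβ, rfl⟩ := mem_specialUnitaryGroup_fin_two_and_apply_one_zero_iff.1 ⟨hB, hB10⟩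
    obtain ⟨γ, hγ, rfl⟩ := mem_specialUnitaryGroup_fin_two_and_apply_one_zero_iff.1 ⟨hC, hC10⟩
    refine ⟨α, β, γ, z, hα, hβ, hγ, hz, ?_, rfl⟩
    simp only [diagonal_apply_eq, cons_val_zero] at hprod
    linear_combination hprod
  · rintro ⟨α, β, γ, w, hα, hβ, hγ, hw, h, hq⟩
    simp only [Prod.mk.injEq] at hq
    obtain ⟨rfl, rfl, rfl, rfl⟩ := hq
    obtain ⟨hA, hA10⟩ := mem_specialUnitaryGroup_fin_two_and_apply_one_zero_iff.2 ⟨α, hα, rfl⟩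
    obtain ⟨hB, hB10⟩ := mem_specialUnitaryGroup_fin_two_and_apply_one_zero_iff.2 ⟨β, hβ, rfl⟩
    obtain ⟨hC, hC10⟩ := mem_specialUnitaryGroup_fin_two_and_apply_one_zero_iff.2 ⟨γ, hγ, rfl⟩
    refine ⟨hA, hB, hC, hw, ?_, hA10, hB10, hC10⟩
    simp only [diagonal_apply_eq, cons_val_zero]
    linear_combination h
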